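/- Convex viewing lemma: Let a, b, c be points of a simple polygon P such that a sees both b and c, and suppose some point d on the segment bc lies in P but is not visible from a. Then the boundary ∂P intersects the segment bc. -/

import Mathlib

open Set

/-- Cyclic successor of an index. -/
def finNext {n : ℕ} (i : Fin n) : Fin n := ⟨(i.val + 1) % n, Nat.mod_lt _ i.pos⟩

/-- A simple polygon in the plane, given by its cyclic list of vertices: consecutive
vertices are joined by segments (the edges), non-adjacent edges are disjoint, and
adjacent edges meet exactly in their shared vertex. -/
structure SimplePolygon where
  n : ℕ
  three_le : 3 ≤ n
  vtx : Fin n → ℝ × ℝ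
  inj : Function.Injective vtx
  nonadj : ∀ i j : Fin n, j ≠ i → j ≠ finNext i → i ≠ finNext j →
    Disjoint (segment ℝ (vtx i) (vtx (finNext i)))
             (segment ℝ (vtx j) (vtx (finNext j)))
  adj : ∀ i : Fin n,
    segment ℝ (vtx i) (vtx (finNext i)) ∩
        segment ℝ (vtx (finNext i)) (vtx (finNext (finNext i)))
      = {vtx (finNext i)}

/-- The boundary `∂P` of the polygon: the union of its edges. -/
def SimplePolygon.boundary (Q : SimplePolygon) : Set (ℝ × ℝ) :=
  ⋃ i : Fin Q.n, segment ℝ (Q.vtx i) (Q.vtx (finNext i))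

/-- The closed region bounded by the polygon: the boundary together with all points
from which one cannot escape to infinity without crossing the boundary. -/
def SimplePolygon.region (Q : SimplePolygon) : Set (ℝ × ℝ) :=
  Q.boundary ∪ {x | ∀ S : Set (ℝ × ℝ), IsConnected S → Disjoint S Q.boundary →
    x ∈ S → Bornology.IsBounded S}

/-- `g` sees `x` in the polygon `Q`: the segment between them lies in the region. -/
def SimplePolygon.sees (Q : SimplePolygon) (g x : ℝ × ℝ) : Prop :=
  segment ℝ g x ⊆ Q.region

/-- The visibility polygon of a point `a`: all points of the region visible from `a`. -/
def SimplePolygon.visPoly (Q : SimplePolygon) (a : ℝ × ℝ) : Set (ℝ × ℝ) :=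
  {x | x ∈ Q.region ∧ Q.sees a x}


/-- Auxiliary: a preconnected set meeting both a set and its complement meets its frontier. -/

lemma IsPreconnected.my_frontier {α : Type*} [TopologicalSpace α] {S T : Set α}
    (hS : IsPreconnected S) (h1 : (S ∩ T).Nonempty) (h2 : (S \ T).Nonempty) :
    (S ∩ frontier T).Nonempty := by
  by_contra hemp
  rw [not_nonempty_iff_eq_empty] at hemp
  have hnf : ∀ x ∈ S, x ∉ frontier T := fun x hx hf =>
    (eq_empty_iff_forall_notMem.mp hemp x) ⟨hx, hf⟩
  have hsub : S ⊆ interior T ∪ (closure T)ᶜ := by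
    intro x hx
    by_cases hc : x ∈ closure T
    · by_cases hi : x ∈ interior T
      · exact Or.inl hi
      · exact absurd ⟨hc, hi⟩ (hnf x hx)
    · exact Or.inr hc
  obtain ⟨z, hzS, hz⟩ := hS (interior T) (closure T)ᶜ isOpen_interior
    isClosed_closure.isOpen_compl hsub
    (h1.imp fun x ⟨hxS, hxT⟩ => ⟨hxS, by
      by_cases hi : x ∈ interior T
      · exact hi
      · exact absurd ⟨subset_closure hxT, hi⟩ (hnf x hxS)⟩)
    (h2.imp fun x ⟨hxS, hxT⟩ => ⟨hxS, fun hc => absurd ⟨hc, fun hi => hxT (interior_subset hi)⟩ (hnf x hxS)⟩)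
  exact hz.2 (subset_closure (interior_subset hz.1))

/-- Auxiliary: the frontier of a (possibly degenerate) triangle is contained in its edges. -/

lemma frontier_triangle_subset (a b c : ℝ × ℝ) :
    frontier (convexHull ℝ ({a, b, c} : Set (ℝ × ℝ))) ⊆
      segment ℝ a b ∪ segment ℝ b c ∪ segment ℝ a c := by
  by_cases hcol : Collinear ℝ ({a, b, c} : Set (ℝ × ℝ))
  · have hhull : convexHull ℝ ({a, b, c} : Set (ℝ × ℝ)) ⊆
        segment ℝ a b ∪ segment ℝ b c ∪ segment ℝ a c := by
      rcases hcol.wbtw_or_wbtw_or_wbtw with h | h | h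
      · -- b between a c : hull ⊆ segment a c
        refine (convexHull_min ?_ (convex_segment a c)).trans ?_
        · simp only [insert_subset_iff, singleton_subset_iff]
          exact ⟨left_mem_segment ℝ a c, h.mem_segment, right_mem_segment ℝ a c⟩
        · exact fun x hx => Or.inr hx
      · -- c between b a : hull ⊆ segment b a = segment a b
        refine (convexHull_min ?_ (convex_segment b a)).trans ?_
        · simp only [insert_subset_iff, singleton_subset_iff]
          exact ⟨right_mem_segment ℝ b a, left_mem_segment ℝ b a, h.mem_segment⟩
        · intro x hx; rw [segment_symm] at hx; exact Or.inl (Or.inl hx)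
      · -- a between c b : hull ⊆ segment c b = segment b c
        refine (convexHull_min ?_ (convex_segment c b)).trans ?_
        · simp only [insert_subset_iff, singleton_subset_iff]
          exact ⟨h.mem_segment, right_mem_segment ℝ c b, left_mem_segment ℝ c b⟩
        · intro x hx; rw [segment_symm] at hx; exact Or.inl (Or.inr hx)
    exact fun x hx => hhull ((((Set.finite_singleton c).insert b |>.insert a).isClosed_convexHull (𝕜 := ℝ)).frontier_subset hx)
  · have hind : AffineIndependent ℝ ![a, b, c] := by
      rw [affineIndependent_iff_not_collinear_set]; simpa using hcol
    have htot : affineSpan ℝ (Set.range ![a, b, c]) = ⊤ := by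
      rw [hind.affineSpan_eq_top_iff_card_eq_finrank_add_one]
      simp
    let B : AffineBasis (Fin 3) ℝ (ℝ × ℝ) := ⟨![a, b, c], hind, htot⟩
    have hrange : Set.range (B : Fin 3 → ℝ × ℝ) = ({a, b, c} : Set (ℝ × ℝ)) := by
      show Set.range ![a, b, c] = _
      ext y
      simp [Matrix.range_cons, Matrix.range_empty]
      tauto
    intro x hx
    have hxhull : x ∈ convexHull ℝ ({a, b, c} : Set (ℝ × ℝ)) :=
      (((Set.finite_singleton c).insert b |>.insert a).isClosed_convexHull (𝕜 := ℝ)).frontier_subset hx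
    have hnint : x ∉ interior (convexHull ℝ ({a, b, c} : Set (ℝ × ℝ))) := hx.2
    rw [← hrange] at hxhull hnint
    rw [B.interior_convexHull] at hnint
    rw [B.convexHull_eq_nonneg_coord] at hxhull
    simp only [mem_setOf_eq, not_forall, not_lt] at hnint
    obtain ⟨i, hi⟩ := hnint
    have hzero : B.coord i x = 0 := le_antisymm hi (hxhull i)
    have hsum := B.sum_coord_apply_eq_one x
    have hcomb := B.linear_combination_coord_eq_self x
    rw [Fin.sum_univ_three] at hsum hcomb
    have hB0 : (B : Fin 3 → ℝ × ℝ) 0 = a := rfl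
    have hB1 : (B : Fin 3 → ℝ × ℝ) 1 = b := rfl
    have hB2 : (B : Fin 3 → ℝ × ℝ) 2 = c := rfl
    fin_cases i
    · -- coord 0 = 0 : x ∈ segment b c
      replace hzero : B.coord 0 x = 0 := hzero
      refine Or.inl (Or.inr ⟨B.coord 1 x, B.coord 2 x, hxhull 1, hxhull 2, ?_, ?_⟩)
      · rw [hzero] at hsum; linarith
      · rw [hzero, hB0, hB1, hB2, zero_smul, zero_add] at hcomb; exact hcomb
    · replace hzero : B.coord 1 x = 0 := hzero
      refine Or.inr ⟨B.coord 0 x, B.coord 2 x, hxhull 0, hxhull 2, ?_, ?_⟩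
      · rw [hzero] at hsum; linarith
      · rw [hzero, hB0, hB1, hB2, zero_smul, add_zero] at hcomb
        exact hcomb
    · replace hzero : B.coord 2 x = 0 := hzero
      refine Or.inl (Or.inl ⟨B.coord 0 x, B.coord 1 x, hxhull 0, hxhull 1, ?_, ?_⟩)
      · rw [hzero] at hsum; linarith
      · rw [hzero, hB0, hB1, hB2, zero_smul, add_zero] at hcomb; exact hcomb

lemma SimplePolygon.boundary_isClosed (Q : SimplePolygon) : IsClosed Q.boundary := by
  refine isClosed_iUnion_of_finite fun i => ?_
  rw [← convexHull_pair]
  exact ((Set.finite_singleton _).insert _).isClosed_convexHull (𝕜 := ℝ)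

/--
**Convex viewing lemma.** Let `a`, `b`, `c` be points of a simple polygon
`P` such that `a` sees both `b` and `c`, and suppose some point `d` on the segment `bc`
lies in `P` but is not visible from `a`.  Then the boundary `∂P` intersects the segment
`bc`.
-/
theorem convex_viewing_lemma (Q : SimplePolygon) (a b c d : ℝ × ℝ)
    (ha : a ∈ Q.region) (hb : b ∈ Q.region) (hc : c ∈ Q.region)
    (hab : Q.sees a b) (hac : Q.sees a c)
    (hd : d ∈ segment ℝ b c) (hdP : d ∈ Q.region) (hnd : ¬ Q.sees a d) :
    (Q.boundary ∩ segment ℝ b c).Nonempty := by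
  by_contra hne
  rw [Set.not_nonempty_iff_eq_empty] at hne
  have hbc_disj : ∀ x ∈ segment ℝ b c, x ∉ Q.boundary := fun x hx hB =>
    (Set.eq_empty_iff_forall_notMem.mp hne x) ⟨hB, hx⟩
  have hdnB : d ∉ Q.boundary := hbc_disj d hd
  have hdprop : ∀ S : Set (ℝ × ℝ), IsConnected S → Disjoint S Q.boundary →
      d ∈ S → Bornology.IsBounded S := hdP.resolve_left hdnB
  apply hnd
  intro p hp
  by_cases hpB : p ∈ Q.boundary
  · exact Or.inl hpB
  · refine Or.inr fun S hS hSdisj hpS => ?_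
    by_contra hub
    set T : Set (ℝ × ℝ) := convexHull ℝ ({a, b, c} : Set (ℝ × ℝ)) with hT
    have hTbdd : Bornology.IsBounded T :=
      isBounded_convexHull.mpr (((Set.finite_singleton c).insert b |>.insert a).isBounded)
    have haT : a ∈ T := subset_convexHull ℝ _ (Set.mem_insert _ _)
    have hbT : b ∈ T := subset_convexHull ℝ _ (by simp)
    have hcT : c ∈ T := subset_convexHull ℝ _ (by simp)
    have hdT : d ∈ T := (convex_convexHull ℝ _).segment_subset hbT hcT hd
    have hpT : p ∈ T := (convex_convexHull ℝ _).segment_subset haT hdT hp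
    have hnsub : ¬ S ⊆ T := fun h => hub (hTbdd.subset h)
    obtain ⟨y, hyS, hyT⟩ := Set.not_subset.mp hnsub
    obtain ⟨x, hxS, hxF⟩ := hS.isPreconnected.my_frontier ⟨p, hpS, hpT⟩ ⟨y, hyS, hyT⟩
    have hxnB : x ∉ Q.boundary := fun h => (hSdisj.ne_of_mem hxS h) rfl
    rcases frontier_triangle_subset a b c hxF with (hxab | hxbc) | hxac
    · -- x on segment a b, hence in the region, hence has the escape property
      exact hub ((hab hxab).resolve_left hxnB S hS hSdisj hxS)
    · -- x on segment b c : connect x to d inside segment b c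
      have hxd_sub : segment ℝ x d ⊆ segment ℝ b c :=
        (convex_segment b c).segment_subset hxbc hd
      have hS' : IsConnected (S ∪ segment ℝ x d) :=
        IsConnected.union ⟨x, hxS, left_mem_segment ℝ x d⟩ hS
          ((convex_segment x d).isConnected ⟨x, left_mem_segment ℝ x d⟩)
      have hdisj' : Disjoint (S ∪ segment ℝ x d) Q.boundary := by
        refine Set.disjoint_union_left.mpr ⟨hSdisj, ?_⟩
        exact Set.disjoint_left.mpr fun z hz => hbc_disj z (hxd_sub hz)
      have := hdprop _ hS' hdisj' (Or.inr (right_mem_segment ℝ x d))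
      exact hub (this.subset Set.subset_union_left)
    · exact hub ((hac hxac).resolve_left hxnB S hS hSdisj hxS)
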